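/- Let T, k be positive integers, ℓ > 0 real, and (aₜ)_{t∈[T]} natural numbers summing to T·k. Suppose that for each t with aₜ = k at least ℓ/2 elements in block t are uncovered, and for each t with aₜ < k at least (k − aₜ)·ℓ elements in block t are uncovered. Then the total number of uncovered elements is at least T·ℓ/2. -/

import Mathlib

/-!
Each block pays at least `ℓ/2 + ℓ/2 · (k − aₜ)`: blocks with `aₜ = k` by hypothesis, deficient
blocks since `(k − aₜ)ℓ` dominates it once `k − aₜ ≥ 1`, and overfull blocks trivially since it is
then `≤ 0`. The surplus terms `k − aₜ` cancel in the sum because the `aₜ` average to `k`.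
-/

open Finset

lemma half_mul_one_add_sub_le {k a : ℕ} {ℓ u : ℝ} (hℓ : 0 ≤ ℓ) (hu : 0 ≤ u)
    (heq : a = k → ℓ / 2 ≤ u) (hlt : a < k → ((k : ℝ) - a) * ℓ ≤ u) :
    ℓ / 2 * (1 + k - a) ≤ u := by
  rcases lt_trichotomy a k with h | rfl | h
  · have hgap : (1 : ℝ) ≤ k - a := by
      have : (a : ℝ) + 1 ≤ k := by exact_mod_cast h
      linarith
    nlinarith [hlt h]
  · simpa using heq rfl
  · have hgap : (k : ℝ) - a ≤ -1 := by
      have : (k : ℝ) + 1 ≤ a := by exact_mod_cast h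
      linarith
    nlinarith

lemma card_mul_half_le_sum {ι : Type*} (s : Finset ι) (k : ℕ) (ℓ : ℝ) (a : ι → ℕ)
    (hsum : ∑ t ∈ s, a t = #s * k) (u : ι → ℝ) (hu : ∀ t ∈ s, ℓ / 2 * (1 + k - a t) ≤ u t) :
    #s * ℓ / 2 ≤ ∑ t ∈ s, u t := by
  have hsum' : ∑ t ∈ s, (a t : ℝ) = #s * k := by exact_mod_cast hsum
  calc (#s : ℝ) * ℓ / 2 = ∑ t ∈ s, ℓ / 2 * (1 + k - a t) := by
        rw [← mul_sum, sum_sub_distrib, sum_add_distrib, hsum']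
        simp only [sum_const, nsmul_eq_mul, mul_one]
        ring
    _ ≤ ∑ t ∈ s, u t := sum_le_sum hu

theorem stmt_16_general (T k : ℕ) (ℓ : ℝ) (hℓ : 0 < ℓ)
    (a : Fin T → ℕ) (hsum : ∑ t, a t = T * k)
    (u : Fin T → ℝ) (hu0 : ∀ t, 0 ≤ u t)
    (heq : ∀ t, a t = k → u t ≥ ℓ / 2)
    (hlt : ∀ t, a t < k → u t ≥ ((k : ℝ) - a t) * ℓ) :
    ∑ t, u t ≥ T * ℓ / 2 := by
  have hcard : #(univ : Finset (Fin T)) = T := card_fin T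
  have := card_mul_half_le_sum univ k ℓ a (by rw [hcard, hsum]) u fun t _ =>
    half_mul_one_add_sub_le hℓ.le (hu0 t) (heq t) (hlt t)
  rwa [hcard] at this

/-- Final soundness computation: the total number of uncovered elements is at
least T·ℓ/2. -/
theorem stmt_16 (T k : ℕ) (hT : 0 < T) (hk : 0 < k) (ℓ : ℝ) (hℓ : 0 < ℓ)
    (a : Fin T → ℕ) (hsum : ∑ t, a t = T * k)
    (u : Fin T → ℝ) (hu0 : ∀ t, 0 ≤ u t)
    (heq : ∀ t, a t = k → u t ≥ ℓ / 2)
    (hlt : ∀ t, a t < k → u t ≥ ((k : ℝ) - a t) * ℓ) :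
    ∑ t, u t ≥ T * ℓ / 2 :=
  stmt_16_general T k ℓ hℓ a hsum u hu0 heq hlt
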